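/- arXiv:2109.13832 — 2 statements merged into one kernel-verified Lean document; each statement's English description precedes it below -/
import Mathlib

section
/- Let V : ℕ → ℝ≥0 satisfy V(k+1) - V(k) ≤ -λ·V(k) + ρ(u) for all k, with 0 < λ < 1, ρ : ℝ≥0 → ℝ≥0 monotone, and u ≥ 0 fixed. If moreover α·(y k)^b ≤ V(k) for constants α, b > 0 and a sequence y : ℕ → ℝ≥0, then y(k) ≤ ((1-λ)^k · V(0)/α)^(1/b) + (ρ(u)/(λ·α))^(1/b) for all k. -/
/-! Unrolling the dissipation inequality `V (k+1) ≤ (1 - λ) V k + c` gives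
`V k ≤ (1 - λ)^k V 0 + c / λ`, the constant `c / λ` being its fixed point. Dividing by `α`,
taking `b`-th roots and using subadditivity of `t ↦ t^(1/b)` for `b ≥ 1` yields the bound on `y`. -/

theorem le_one_sub_pow_mul_add_div_of_sub_le {V : ℕ → ℝ} {lam c : ℝ} (hlam0 : 0 < lam)
    (hlam1 : lam ≤ 1) (hc : 0 ≤ c) (hrec : ∀ k, V (k + 1) - V k ≤ -lam * V k + c) (k : ℕ) :
    V k ≤ (1 - lam) ^ k * V 0 + c / lam := by
  induction k with
  | zero => simpa using div_nonneg hc hlam0.le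
  | succ n ih =>
    have hfix : (1 - lam) * (c / lam) + c = c / lam := by field_simp; ring
    calc V (n + 1) ≤ (1 - lam) * V n + c := by linarith [hrec n]
      _ ≤ (1 - lam) * ((1 - lam) ^ n * V 0 + c / lam) + c := by gcongr
      _ = (1 - lam) ^ (n + 1) * V 0 + c / lam := by linear_combination hfix

theorem le_rpow_one_div_of_mul_rpow_le {y α b W : ℝ} (hy : 0 ≤ y) (hα : 0 < α) (hb : 0 < b)
    (h : α * y ^ b ≤ W) : y ≤ (W / α) ^ (1 / b) := by
  have hW : 0 ≤ W / α := div_nonneg ((by positivity : 0 ≤ α * y ^ b).trans h) hα.le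
  rw [one_div, Real.le_rpow_inv_iff_of_pos hy hW hb, le_div_iff₀ hα, mul_comm]
  exact h

theorem stmt_1_general (V y : ℕ → ℝ) (lam u α b : ℝ) (ρ : ℝ → ℝ)
    (hy : ∀ k, 0 ≤ y k)
    (hlam0 : 0 < lam) (hlam1 : lam < 1)
    (hρ0 : ∀ t, 0 ≤ t → 0 ≤ ρ t) (hu : 0 ≤ u)
    (hα : 0 < α) (hb : 1 ≤ b)
    (hrec : ∀ k, V (k + 1) - V k ≤ -lam * V k + ρ u)
    (hlow : ∀ k, α * (y k) ^ b ≤ V k) :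
    ∀ k, y k ≤ ((1 - lam) ^ k * V 0 / α) ^ (1 / b) + (ρ u / (lam * α)) ^ (1 / b) := by
  intro k
  have hb0 : 0 < b := one_pos.trans_le hb
  have hV0 : 0 ≤ V 0 := (mul_nonneg hα.le (Real.rpow_nonneg (hy 0) b)).trans (hlow 0)
  have hρu : 0 ≤ ρ u := hρ0 u hu
  have hdecay : 0 ≤ (1 - lam) ^ k * V 0 / α :=
    div_nonneg (mul_nonneg (pow_nonneg (by linarith) k) hV0) hα.le
  have hVk := le_one_sub_pow_mul_add_div_of_sub_le hlam0 hlam1.le hρu hrec k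
  calc y k ≤ (((1 - lam) ^ k * V 0 + ρ u / lam) / α) ^ (1 / b) :=
        le_rpow_one_div_of_mul_rpow_le (hy k) hα hb0 ((hlow k).trans hVk)
    _ = ((1 - lam) ^ k * V 0 / α + ρ u / (lam * α)) ^ (1 / b) := by rw [add_div, div_div]
    _ ≤ ((1 - lam) ^ k * V 0 / α) ^ (1 / b) + (ρ u / (lam * α)) ^ (1 / b) :=
        Real.rpow_add_le_add_rpow hdecay (div_nonneg hρu (by positivity)) (by positivity)
          ((div_le_one hb0).2 hb)

theorem stmt_1 (V y : ℕ → ℝ) (lam u α b : ℝ) (ρ : ℝ → ℝ)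
    (hV : ∀ k, 0 ≤ V k) (hy : ∀ k, 0 ≤ y k)
    (hlam0 : 0 < lam) (hlam1 : lam < 1)
    (hρ : Monotone ρ) (hρ0 : ∀ t, 0 ≤ t → 0 ≤ ρ t) (hu : 0 ≤ u)
    (hα : 0 < α) (hb : 1 ≤ b)
    (hrec : ∀ k, V (k + 1) - V k ≤ -lam * V k + ρ u)
    (hlow : ∀ k, α * (y k) ^ b ≤ V k) :
    ∀ k, y k ≤ ((1 - lam) ^ k * V 0 / α) ^ (1 / b) + (ρ u / (lam * α)) ^ (1 / b) :=
  stmt_1_general V y lam u α b ρ hy hlam0 hlam1 hρ0 hu hα hb hrec hlow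
end

section
/- Let A, B, C, D, Â, B̂, Ĉ, D̂, P, K, Q, R, T, M, M' be real matrices of compatible dimensions, with M, M' symmetric positive definite, satisfying: (i) CᵀC ⪯ M, (ii) 3(A+BK)ᵀM'(A+BK) - M ⪯ -κM for some 0 < κ < 1, (iii) AP = PÂ - BQ, (iv) D = PD̂ - BT, (v) CP = Ĉ. Define V(x, x̂) = (x-Px̂)ᵀM(x-Px̂) and u = K(x-Px̂) + Qx̂ + Rû + Tŵ. Then for all x, x̂, w, ŵ, û: (a) |Cx - Ĉx̂|² ≤ V(x,x̂), and (b) V'(Ax+Dw+Bu, Âx̂+D̂ŵ+B̂û) - V(x,x̂) ≤ -κ·V(x,x̂) + 3|√M' D|²·|w-ŵ|² + 3|√M'(BR - PB̂)|²·|û|², where V'(e) uses M' in place of M and |√M' X| denotes the operator norm of √M' X. -/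
open Matrix
open scoped Matrix.Norms.L2Operator

/-!
Write `e = x - P x̂` for the tracking error. The matching conditions `AP = PÂ - BQ`,
`D = PD̂ - BT` and `CP = Ĉ` make the output error equal to `Ce` and the next error equal to
`(A + BK)e + D(w - ŵ) + (BR - PB̂)û`. The output bound is then `CᵀC ⪯ M`. For the decrease,
the `M'`-quadratic form of a sum of three vectors is at most three times the sum of the
forms; the first term is controlled by the LMI, and the other two by writing
`M' = √M' √M'`, so that `vᵀM'v = |√M' v|²`, and bounding by the operator norm.
-/

namespace Matrix

open scoped MatrixOrder

section Quadratic

variable {R m n : Type*} [CommSemiring R] [Fintype m] [Fintype n]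

lemma dotProduct_mulVec_mulVec_eq (X : Matrix m n R) (N : Matrix m m R) (v : n → R) :
    X *ᵥ v ⬝ᵥ N *ᵥ (X *ᵥ v) = v ⬝ᵥ (Xᵀ * N * X) *ᵥ v := by
  rw [← mulVec_mulVec, ← mulVec_mulVec, dotProduct_mulVec v, vecMul_transpose]

lemma dotProduct_self_mulVec_eq (X : Matrix m n R) (v : n → R) :
    X *ᵥ v ⬝ᵥ X *ᵥ v = v ⬝ᵥ (Xᵀ * X) *ᵥ v := by
  rw [← mulVec_mulVec, dotProduct_mulVec v, vecMul_transpose]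

end Quadratic

variable {m n : Type*} [Fintype m] [Fintype n]

lemma IsHermitian.dotProduct_mulVec_comm {N : Matrix n n ℝ} (hN : N.IsHermitian) (u v : n → ℝ) :
    u ⬝ᵥ N *ᵥ v = v ⬝ᵥ N *ᵥ u := by
  have hNt : Nᵀ = N := hN
  rw [dotProduct_mulVec u, ← hNt, vecMul_transpose, hNt, dotProduct_comm]

lemma PosSemidef.dotProduct_mulVec_le_of_sub {N N' : Matrix n n ℝ} (h : (N - N').PosSemidef)
    (v : n → ℝ) : v ⬝ᵥ N' *ᵥ v ≤ v ⬝ᵥ N *ᵥ v := by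
  have := h.dotProduct_mulVec_nonneg v
  simp only [star_trivial, sub_mulVec, dotProduct_sub] at this
  linarith

lemma PosSemidef.two_mul_dotProduct_mulVec_le {N : Matrix n n ℝ} (hN : N.PosSemidef)
    (u v : n → ℝ) : 2 * (u ⬝ᵥ N *ᵥ v) ≤ u ⬝ᵥ N *ᵥ u + v ⬝ᵥ N *ᵥ v := by
  have h := hN.dotProduct_mulVec_nonneg (u - v)
  have hcomm := hN.1.dotProduct_mulVec_comm u v
  simp only [star_trivial, mulVec_sub, dotProduct_sub, sub_dotProduct] at h
  linarith

lemma PosSemidef.dotProduct_mulVec_add_add_le {N : Matrix n n ℝ} (hN : N.PosSemidef)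
    (a b c : n → ℝ) :
    (a + b + c) ⬝ᵥ N *ᵥ (a + b + c) ≤
      3 * (a ⬝ᵥ N *ᵥ a) + 3 * (b ⬝ᵥ N *ᵥ b) + 3 * (c ⬝ᵥ N *ᵥ c) := by
  have hab := hN.two_mul_dotProduct_mulVec_le a b
  have hac := hN.two_mul_dotProduct_mulVec_le a c
  have hbc := hN.two_mul_dotProduct_mulVec_le b c
  have hba := hN.1.dotProduct_mulVec_comm b a
  have hca := hN.1.dotProduct_mulVec_comm c a
  have hcb := hN.1.dotProduct_mulVec_comm c b
  simp only [mulVec_add, dotProduct_add, add_dotProduct]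
  linarith

lemma dotProduct_self_eq_norm_toLp_sq (v : n → ℝ) : v ⬝ᵥ v = ‖WithLp.toLp 2 v‖ ^ 2 := by
  rw [EuclideanSpace.real_norm_sq_eq]
  simp [dotProduct, sq]

variable [DecidableEq n]

lemma dotProduct_self_mulVec_le_l2_opNorm_sq (Y : Matrix m n ℝ) (v : n → ℝ) :
    Y *ᵥ v ⬝ᵥ Y *ᵥ v ≤ ‖Y‖ ^ 2 * (v ⬝ᵥ v) := by
  rw [dotProduct_self_eq_norm_toLp_sq, dotProduct_self_eq_norm_toLp_sq v, ← mul_pow]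
  exact pow_le_pow_left₀ (norm_nonneg _) (Y.l2_opNorm_mulVec (WithLp.toLp 2 v)) 2

lemma PosSemidef.eigenvectorUnitary_mul_diagonal_sqrt_mul_star {N : Matrix n n ℝ}
    (hN : N.PosSemidef) :
    (hN.1.eigenvectorUnitary : Matrix n n ℝ) * diagonal (fun i => √(hN.1.eigenvalues i)) *
      (star hN.1.eigenvectorUnitary : Matrix n n ℝ) = CFC.sqrt N := by
  rw [CFC.sqrt_eq_real_sqrt N hN.nonneg, cfcₙ_eq_cfc, hN.1.cfc_eq]
  rfl

lemma PosSemidef.dotProduct_mulVec_le_l2_opNorm_sqrt_mul_sq [DecidableEq m] {N : Matrix n n ℝ}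
    (hN : N.PosSemidef) (X : Matrix n m ℝ) (v : m → ℝ) :
    X *ᵥ v ⬝ᵥ N *ᵥ (X *ᵥ v) ≤ ‖CFC.sqrt N * X‖ ^ 2 * (v ⬝ᵥ v) := by
  have hN_eq : (CFC.sqrt N)ᵀ * CFC.sqrt N = N := by
    rw [← conjTranspose_eq_transpose_of_trivial, ← star_eq_conjTranspose,
      (CFC.sqrt_nonneg N).isSelfAdjoint.star_eq, CFC.sqrt_mul_sqrt_self N hN.nonneg]
  calc X *ᵥ v ⬝ᵥ N *ᵥ (X *ᵥ v)
      = (CFC.sqrt N * X) *ᵥ v ⬝ᵥ (CFC.sqrt N * X) *ᵥ v := by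
        rw [dotProduct_mulVec_mulVec_eq, dotProduct_self_mulVec_eq, transpose_mul]
        conv_lhs => rw [← hN_eq]
        simp only [Matrix.mul_assoc]
    _ ≤ ‖CFC.sqrt N * X‖ ^ 2 * (v ⬝ᵥ v) := dotProduct_self_mulVec_le_l2_opNorm_sq _ v

end Matrix

section Simulation

variable {α n nh m mh nw : Type*} [CommRing α] [Fintype n] [Fintype nh] [Fintype m]
  [Fintype mh] [Fintype nw] {A : Matrix n n α} {B : Matrix n m α} {D : Matrix n nw α}
  {Ah : Matrix nh nh α} {Bh : Matrix nh mh α} {Dh : Matrix nh nw α} {P : Matrix n nh α}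
  {Q : Matrix m nh α} {T : Matrix m nw α}

lemma next_tracking_error_eq (K : Matrix m n α) (R : Matrix m mh α)
    (hAP : A * P = P * Ah - B * Q) (hD : D = P * Dh - B * T)
    (x : n → α) (xh : nh → α) (w wh : nw → α) (uh : mh → α) :
    A *ᵥ x + D *ᵥ w + B *ᵥ (K *ᵥ (x - P *ᵥ xh) + Q *ᵥ xh + R *ᵥ uh + T *ᵥ wh) -
        P *ᵥ (Ah *ᵥ xh + Dh *ᵥ wh + Bh *ᵥ uh) =
      (A + B * K) *ᵥ (x - P *ᵥ xh) + D *ᵥ (w - wh) + (B * R - P * Bh) *ᵥ uh := by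
  have hAPv : A *ᵥ P *ᵥ xh = P *ᵥ Ah *ᵥ xh - B *ᵥ Q *ᵥ xh := by
    simp only [mulVec_mulVec, hAP, sub_mulVec]
  simp only [hD, mulVec_add, mulVec_sub, add_mulVec, sub_mulVec, ← mulVec_mulVec, hAPv]
  abel

end Simulation

theorem stmt_8_general {n nh m mh nw q : ℕ}
    (A : Matrix (Fin n) (Fin n) ℝ) (B : Matrix (Fin n) (Fin m) ℝ)
    (C : Matrix (Fin q) (Fin n) ℝ) (D : Matrix (Fin n) (Fin nw) ℝ)
    (Ah : Matrix (Fin nh) (Fin nh) ℝ) (Bh : Matrix (Fin nh) (Fin mh) ℝ)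
    (Ch : Matrix (Fin q) (Fin nh) ℝ) (Dh : Matrix (Fin nh) (Fin nw) ℝ)
    (P : Matrix (Fin n) (Fin nh) ℝ) (K : Matrix (Fin m) (Fin n) ℝ)
    (Q : Matrix (Fin m) (Fin nh) ℝ) (R : Matrix (Fin m) (Fin mh) ℝ)
    (T : Matrix (Fin m) (Fin nw) ℝ) (M M' : Matrix (Fin n) (Fin n) ℝ) (κ : ℝ)
    (hM' : M'.PosDef)
    (hC : (M - Cᵀ * C).PosSemidef)
    (hLMI : ((-κ) • M - ((3 : ℝ) • ((A + B * K)ᵀ * M' * (A + B * K)) - M)).PosSemidef)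
    (hAP : A * P = P * Ah - B * Q)
    (hD : D = P * Dh - B * T)
    (hCP : C * P = Ch) :
    ∀ (x : Fin n → ℝ) (xh : Fin nh → ℝ) (w wh : Fin nw → ℝ) (uh : Fin mh → ℝ),
      ((C.mulVec x - Ch.mulVec xh) ⬝ᵥ (C.mulVec x - Ch.mulVec xh) ≤
        (x - P.mulVec xh) ⬝ᵥ M.mulVec (x - P.mulVec xh)) ∧
      (letI u := K.mulVec (x - P.mulVec xh) + Q.mulVec xh + R.mulVec uh + T.mulVec wh
       letI x' := A.mulVec x + D.mulVec w + B.mulVec u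
       letI xh' := Ah.mulVec xh + Dh.mulVec wh + Bh.mulVec uh
       (x' - P.mulVec xh') ⬝ᵥ M'.mulVec (x' - P.mulVec xh') -
         (x - P.mulVec xh) ⬝ᵥ M.mulVec (x - P.mulVec xh) ≤
       -κ * ((x - P.mulVec xh) ⬝ᵥ M.mulVec (x - P.mulVec xh)) +
         3 * ‖((hM'.posSemidef.1.eigenvectorUnitary : Matrix (Fin n) (Fin n) ℝ) *
            diagonal (fun i => Real.sqrt (hM'.posSemidef.1.eigenvalues i)) *
            (star hM'.posSemidef.1.eigenvectorUnitary : Matrix (Fin n) (Fin n) ℝ)) * D‖ ^ 2 * ((w - wh) ⬝ᵥ (w - wh)) +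
         3 * ‖((hM'.posSemidef.1.eigenvectorUnitary : Matrix (Fin n) (Fin n) ℝ) *
            diagonal (fun i => Real.sqrt (hM'.posSemidef.1.eigenvalues i)) *
            (star hM'.posSemidef.1.eigenvectorUnitary : Matrix (Fin n) (Fin n) ℝ)) *
            (B * R - P * Bh)‖ ^ 2 * (uh ⬝ᵥ uh)) := by
  intro x xh w wh uh
  refine ⟨?_, ?_⟩
  · rw [← hCP, ← mulVec_mulVec, ← mulVec_sub, dotProduct_self_mulVec_eq]
    exact hC.dotProduct_mulVec_le_of_sub _
  · have hM'₀ := hM'.posSemidef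
    rw [hM'₀.eigenvectorUnitary_mul_diagonal_sqrt_mul_star, next_tracking_error_eq K R hAP hD]
    set e := x - P *ᵥ xh
    have hsum := hM'₀.dotProduct_mulVec_add_add_le ((A + B * K) *ᵥ e) (D *ᵥ (w - wh))
      ((B * R - P * Bh) *ᵥ uh)
    have hdecay := hLMI.dotProduct_mulVec_le_of_sub e
    simp only [sub_mulVec, smul_mulVec, dotProduct_sub, dotProduct_smul, smul_eq_mul,
      ← dotProduct_mulVec_mulVec_eq] at hdecay
    have hw := hM'₀.dotProduct_mulVec_le_l2_opNorm_sqrt_mul_sq D (w - wh)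
    have hu := hM'₀.dotProduct_mulVec_le_l2_opNorm_sqrt_mul_sq (B * R - P * Bh) uh
    linarith

/-- Theorem 2 of the paper (single mode pair): `V(x,x̂) = (x-Px̂)ᵀM(x-Px̂)` is a
simulation function from the abstract linear system to the concrete one with the
given interface input `u`. Here `‖·‖` is the L2 operator norm of a matrix, and
`xᵀMx` is written via dot products. -/
theorem stmt_8 {n nh m mh nw q : ℕ}
    (A : Matrix (Fin n) (Fin n) ℝ) (B : Matrix (Fin n) (Fin m) ℝ)
    (C : Matrix (Fin q) (Fin n) ℝ) (D : Matrix (Fin n) (Fin nw) ℝ)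
    (Ah : Matrix (Fin nh) (Fin nh) ℝ) (Bh : Matrix (Fin nh) (Fin mh) ℝ)
    (Ch : Matrix (Fin q) (Fin nh) ℝ) (Dh : Matrix (Fin nh) (Fin nw) ℝ)
    (P : Matrix (Fin n) (Fin nh) ℝ) (K : Matrix (Fin m) (Fin n) ℝ)
    (Q : Matrix (Fin m) (Fin nh) ℝ) (R : Matrix (Fin m) (Fin mh) ℝ)
    (T : Matrix (Fin m) (Fin nw) ℝ) (M M' : Matrix (Fin n) (Fin n) ℝ) (κ : ℝ)
    (hM : M.PosDef) (hM' : M'.PosDef) (hκ0 : 0 < κ) (hκ1 : κ < 1)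
    (hC : (M - Cᵀ * C).PosSemidef)
    (hLMI : ((-κ) • M - ((3 : ℝ) • ((A + B * K)ᵀ * M' * (A + B * K)) - M)).PosSemidef)
    (hAP : A * P = P * Ah - B * Q)
    (hD : D = P * Dh - B * T)
    (hCP : C * P = Ch) :
    ∀ (x : Fin n → ℝ) (xh : Fin nh → ℝ) (w wh : Fin nw → ℝ) (uh : Fin mh → ℝ),
      ((C.mulVec x - Ch.mulVec xh) ⬝ᵥ (C.mulVec x - Ch.mulVec xh) ≤
        (x - P.mulVec xh) ⬝ᵥ M.mulVec (x - P.mulVec xh)) ∧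
      (letI u := K.mulVec (x - P.mulVec xh) + Q.mulVec xh + R.mulVec uh + T.mulVec wh
       letI x' := A.mulVec x + D.mulVec w + B.mulVec u
       letI xh' := Ah.mulVec xh + Dh.mulVec wh + Bh.mulVec uh
       (x' - P.mulVec xh') ⬝ᵥ M'.mulVec (x' - P.mulVec xh') -
         (x - P.mulVec xh) ⬝ᵥ M.mulVec (x - P.mulVec xh) ≤
       -κ * ((x - P.mulVec xh) ⬝ᵥ M.mulVec (x - P.mulVec xh)) +
         3 * ‖((hM'.posSemidef.1.eigenvectorUnitary : Matrix (Fin n) (Fin n) ℝ) *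
            diagonal (fun i => Real.sqrt (hM'.posSemidef.1.eigenvalues i)) *
            (star hM'.posSemidef.1.eigenvectorUnitary : Matrix (Fin n) (Fin n) ℝ)) * D‖ ^ 2 * ((w - wh) ⬝ᵥ (w - wh)) +
         3 * ‖((hM'.posSemidef.1.eigenvectorUnitary : Matrix (Fin n) (Fin n) ℝ) *
            diagonal (fun i => Real.sqrt (hM'.posSemidef.1.eigenvalues i)) *
            (star hM'.posSemidef.1.eigenvectorUnitary : Matrix (Fin n) (Fin n) ℝ)) *
            (B * R - P * Bh)‖ ^ 2 * (uh ⬝ᵥ uh)) :=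
  stmt_8_general A B C D Ah Bh Ch Dh P K Q R T M M' κ hM' hC hLMI hAP hD hCP
end
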